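/- arXiv:2602.03846 — 2 statements merged into one kernel-verified Lean document; each statement's English description precedes it below -/
import Mathlib

section
/- Consider a feedforward network with L layers: given dimensions d₀,…,d_L, weight matrices W⁽ℓ⁾ ∈ ℝ^{d_ℓ × d_{ℓ−1}}, and arbitrary activation maps σ⁽ℓ⁾ : ℝ^{d_ℓ} → ℝ^{d_ℓ}, define post-activations recursively by h⁽⁰⁾(x) = x and h⁽ℓ⁾(x) = σ⁽ℓ⁾(W⁽ℓ⁾ h⁽ℓ⁻¹⁾(x)), and let f_W(x) := h⁽ᴸ⁾(x) denote the network output. Let Y be a measurable label space, P₀ a measure on ℝ^{d₀} × Y, ℓ : ℝ^{d_L} × Y → ℝ a loss function, and define the old-task loss L₀(W) := ∫ ℓ(f_W(x), y) dP₀(x, y). Let ΔW⁽ℓ⁾ be perturbation matrices. If for P₀-almost every (x, y) one has ΔW⁽ℓ⁾ · h⁽ℓ⁻¹⁾(x) = 0 for every layer ℓ = 1,…,L (where h⁽ℓ⁾ are the post-activations of the unperturbed network), then L₀(W + ΔW) = L₀(W), i.e., the forgetting F₀ := L₀(W + ΔW) − L₀(W) equals zero. -/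
open MeasureTheory

theorem perturbed_layers_eq_of_mulVec_eq_zero {R : Type*} [NonUnitalNonAssocSemiring R]
    {L : ℕ} {ι : Fin (L + 1) → Type*} [∀ ℓ, Fintype (ι ℓ)]
    (W ΔW : ∀ ℓ : Fin L, Matrix (ι ℓ.succ) (ι ℓ.castSucc) R)
    (σ : ∀ ℓ : Fin L, (ι ℓ.succ → R) → ι ℓ.succ → R)
    {h h' : ∀ ℓ : Fin (L + 1), ι ℓ → R} (h'_zero : h' 0 = h 0)
    (hrec : ∀ ℓ : Fin L, h ℓ.succ = σ ℓ ((W ℓ).mulVec (h ℓ.castSucc)))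
    (h'rec : ∀ ℓ : Fin L, h' ℓ.succ = σ ℓ ((W ℓ + ΔW ℓ).mulVec (h' ℓ.castSucc)))
    (horth : ∀ ℓ : Fin L, (ΔW ℓ).mulVec (h ℓ.castSucc) = 0) (ℓ : Fin (L + 1)) :
    h' ℓ = h ℓ := by
  induction ℓ using Fin.induction with
  | zero => exact h'_zero
  | succ ℓ ih => rw [h'rec, hrec, ih, Matrix.add_mulVec, horth ℓ, add_zero]

/-- **Per-layer orthogonality on `P₀` yields no forgetting.**
A feedforward network with weights `W ℓ` and arbitrary activations `σ ℓ`
computes post-activations `h x 0 = x`, `h x (ℓ+1) = σ ℓ (W ℓ *ᵥ h x ℓ)`, with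
output `f_W(x) = h x (Fin.last L)`; the perturbed network uses weights
`W ℓ + ΔW ℓ` and the same activations.  If for `P₀`-almost every `(x, y)` one
has `ΔW ℓ *ᵥ h x ℓ = 0` for every layer `ℓ`, then the old-task loss
`L₀(W) = ∫ ℓoss (f_W x) y dP₀` is unchanged, i.e. the forgetting
`L₀(W + ΔW) − L₀(W)` is zero. -/
theorem stmt1
    (L : ℕ) (d : Fin (L + 1) → ℕ)
    (Y : Type*) [MeasurableSpace Y]
    (P₀ : Measure ((Fin (d 0) → ℝ) × Y))
    (loss : (Fin (d (Fin.last L)) → ℝ) → Y → ℝ)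
    (W ΔW : ∀ ℓ : Fin L, Matrix (Fin (d ℓ.succ)) (Fin (d ℓ.castSucc)) ℝ)
    (σ : ∀ ℓ : Fin L, (Fin (d ℓ.succ) → ℝ) → (Fin (d ℓ.succ) → ℝ))
    (h htilde : (Fin (d 0) → ℝ) → ∀ ℓ : Fin (L + 1), Fin (d ℓ) → ℝ)
    (h0 : ∀ x, h x 0 = x)
    (htilde0 : ∀ x, htilde x 0 = x)
    (hrec : ∀ x, ∀ ℓ : Fin L, h x ℓ.succ = σ ℓ ((W ℓ).mulVec (h x ℓ.castSucc)))
    (htilderec : ∀ x, ∀ ℓ : Fin L,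
      htilde x ℓ.succ = σ ℓ ((W ℓ + ΔW ℓ).mulVec (htilde x ℓ.castSucc)))
    (horth : ∀ᵐ p ∂P₀, ∀ ℓ : Fin L, (ΔW ℓ).mulVec (h p.1 ℓ.castSucc) = 0) :
    ∫ p, loss (htilde p.1 (Fin.last L)) p.2 ∂P₀ =
      ∫ p, loss (h p.1 (Fin.last L)) p.2 ∂P₀ := by
  refine integral_congr_ae ?_
  filter_upwards [horth] with p hp
  rw [perturbed_layers_eq_of_mulVec_eq_zero W ΔW σ ((htilde0 p.1).trans (h0 p.1).symm)
    (hrec p.1) (htilderec p.1) hp]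
end

section
/- Let θ₀ ∈ ℝⁿ, let L₀ : ℝⁿ → ℝ, let H₀ ∈ ℝ^{n×n} be symmetric, let G ∈ ℝ^{n×n} be positive semidefinite, and let S be a nonzero linear subspace of ℝⁿ. Define the drift radius ε(S) by ε(S)² := sup{ vᵀGv : v ∈ S, ‖v‖₂ = 1 }. Assume: (i) (Taylor control at a stationary point) there exist ρ₀ > 0 and C_T ≥ 0 such that |L₀(θ₀ + Δθ) − L₀(θ₀) − ½ ΔθᵀH₀Δθ| ≤ C_T ‖Δθ‖₂³ for all Δθ with ‖Δθ‖₂ ≤ ρ₀; (ii) (curvature link) there exists μ₀ > 0 such that ΔθᵀH₀Δθ ≥ μ₀ ΔθᵀGΔθ for all Δθ ∈ S. Then for every ρ with 0 < ρ ≤ ρ₀ there exists Δθ ∈ S with ‖Δθ‖₂ = ρ such that L₀(θ₀ + Δθ) − L₀(θ₀) ≥ (μ₀/2) ε(S)² ρ² − C_T ρ³. -/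
/-!
The maximiser `v` of `vᵀGv` on the unit sphere of `S` (which exists by compactness) realises
`ε(S)²`. Along `Δθ = ρ v` the curvature link gives `½ ΔθᵀH₀Δθ ≥ (μ₀/2) ε(S)² ρ²`, and the
Taylor control loses at most `C_T ρ³`.
-/

open scoped RealInnerProductSpace

/-- The quadratic form `v ↦ vᵀ G v` of a matrix `G`, on Euclidean space. -/
noncomputable def quadForm {n : ℕ} (G : Matrix (Fin n) (Fin n) ℝ)
    (v : EuclideanSpace ℝ (Fin n)) : ℝ :=
  ⟪v, Matrix.toEuclideanLin G v⟫

lemma quadForm_smul {n : ℕ} (G : Matrix (Fin n) (Fin n) ℝ) (c : ℝ)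
    (v : EuclideanSpace ℝ (Fin n)) : quadForm G (c • v) = c ^ 2 * quadForm G v := by
  simp only [quadForm, map_smul, real_inner_smul_left, real_inner_smul_right]
  ring

lemma continuous_quadForm {n : ℕ} (G : Matrix (Fin n) (Fin n) ℝ) :
    Continuous (quadForm G) :=
  continuous_id.inner (Matrix.toEuclideanLin G).continuous_of_finiteDimensional

lemma Submodule.exists_mem_sphere_isGreatest {E : Type*} [NormedAddCommGroup E]
    [NormedSpace ℝ E] [FiniteDimensional ℝ E] {S : Submodule ℝ E} (hS : S ≠ ⊥)
    {f : E → ℝ} (hf : Continuous f) :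
    ∃ v ∈ S, ‖v‖ = 1 ∧ IsGreatest {r | ∃ w, w ∈ S ∧ ‖w‖ = 1 ∧ r = f w} (f v) := by
  have := Submodule.nontrivial_iff_ne_bot.mpr hS
  obtain ⟨v, hv_sphere, hv_max⟩ := (isCompact_sphere (0 : S) 1).exists_isMaxOn
    (NormedSpace.sphere_nonempty.mpr zero_le_one) (hf.comp continuous_subtype_val).continuousOn
  have hv : ‖(v : E)‖ = 1 := by simpa using hv_sphere
  refine ⟨v, v.2, hv, ⟨v, v.2, hv, rfl⟩, ?_⟩
  rintro r ⟨w, hwS, hw, rfl⟩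
  exact hv_max (a := ⟨w, hwS⟩) (by simpa using hw)

theorem stmt4_general
    (n : ℕ)
    (θ₀ : EuclideanSpace ℝ (Fin n))
    (L₀ : EuclideanSpace ℝ (Fin n) → ℝ)
    (H₀ G : Matrix (Fin n) (Fin n) ℝ)
    (S : Submodule ℝ (EuclideanSpace ℝ (Fin n))) (hS : S ≠ ⊥)
    (epsSq : ℝ)
    (heps : epsSq = sSup {r : ℝ | ∃ v : EuclideanSpace ℝ (Fin n),
      v ∈ S ∧ ‖v‖ = 1 ∧ r = quadForm G v})
    (ρ₀ C_T : ℝ)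
    (hTaylor : ∀ Δθ : EuclideanSpace ℝ (Fin n), ‖Δθ‖ ≤ ρ₀ →
      |L₀ (θ₀ + Δθ) - L₀ θ₀ - (1 / 2) * quadForm H₀ Δθ| ≤ C_T * ‖Δθ‖ ^ 3)
    (μ₀ : ℝ)
    (hlink : ∀ Δθ ∈ S, μ₀ * quadForm G Δθ ≤ quadForm H₀ Δθ) :
    ∀ ρ : ℝ, 0 < ρ → ρ ≤ ρ₀ →
      ∃ Δθ ∈ S, ‖Δθ‖ = ρ ∧
        (μ₀ / 2) * epsSq * ρ ^ 2 - C_T * ρ ^ 3 ≤ L₀ (θ₀ + Δθ) - L₀ θ₀ := by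
  intro ρ hρ hρρ₀
  obtain ⟨v, hvS, hv, hv_max⟩ := S.exists_mem_sphere_isGreatest hS (continuous_quadForm G)
  have hρv : ‖ρ • v‖ = ρ := by rw [norm_smul, hv, Real.norm_of_nonneg hρ.le, mul_one]
  refine ⟨ρ • v, S.smul_mem ρ hvS, hρv, ?_⟩
  have hTaylor_lower := (abs_le.mp (hTaylor (ρ • v) (hρv.le.trans hρρ₀))).1
  have hlink_v := hlink (ρ • v) (S.smul_mem ρ hvS)
  rw [hρv] at hTaylor_lower
  rw [quadForm_smul] at hlink_v
  rw [heps, hv_max.csSup_eq]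
  linarith

/-- **Lower bound on worst-case forgetting under approximate orthogonality.**
Let `θ₀ ∈ ℝⁿ`, `L₀ : ℝⁿ → ℝ`, `H₀` symmetric, `G` positive semidefinite, and
`S` a nonzero subspace of `ℝⁿ`, with drift radius `ε(S)` given by
`ε(S)² = sup { vᵀGv : v ∈ S, ‖v‖₂ = 1 }`.  Assume Taylor control at a
stationary point (`|L₀(θ₀+Δθ) − L₀(θ₀) − ½ΔθᵀH₀Δθ| ≤ C_T‖Δθ‖³` for
`‖Δθ‖ ≤ ρ₀`) and the curvature link `ΔθᵀH₀Δθ ≥ μ₀ ΔθᵀGΔθ` on `S`.  Then for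
every `0 < ρ ≤ ρ₀` there is `Δθ ∈ S` with `‖Δθ‖₂ = ρ` and
`L₀(θ₀+Δθ) − L₀(θ₀) ≥ (μ₀/2) ε(S)² ρ² − C_T ρ³`. -/
theorem stmt4
    (n : ℕ)
    (θ₀ : EuclideanSpace ℝ (Fin n))
    (L₀ : EuclideanSpace ℝ (Fin n) → ℝ)
    (H₀ G : Matrix (Fin n) (Fin n) ℝ)
    (hH₀ : H₀.IsSymm) (hG : G.PosSemidef)
    (S : Submodule ℝ (EuclideanSpace ℝ (Fin n))) (hS : S ≠ ⊥)
    (epsSq : ℝ)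
    (heps : epsSq = sSup {r : ℝ | ∃ v : EuclideanSpace ℝ (Fin n),
      v ∈ S ∧ ‖v‖ = 1 ∧ r = quadForm G v})
    (ρ₀ C_T : ℝ) (hρ₀ : 0 < ρ₀) (hCT : 0 ≤ C_T)
    (hTaylor : ∀ Δθ : EuclideanSpace ℝ (Fin n), ‖Δθ‖ ≤ ρ₀ →
      |L₀ (θ₀ + Δθ) - L₀ θ₀ - (1 / 2) * quadForm H₀ Δθ| ≤ C_T * ‖Δθ‖ ^ 3)
    (μ₀ : ℝ) (hμ₀ : 0 < μ₀)
    (hlink : ∀ Δθ ∈ S, μ₀ * quadForm G Δθ ≤ quadForm H₀ Δθ) :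
    ∀ ρ : ℝ, 0 < ρ → ρ ≤ ρ₀ →
      ∃ Δθ ∈ S, ‖Δθ‖ = ρ ∧
        (μ₀ / 2) * epsSq * ρ ^ 2 - C_T * ρ ^ 3 ≤ L₀ (θ₀ + Δθ) - L₀ θ₀ :=
  stmt4_general n θ₀ L₀ H₀ G S hS epsSq heps ρ₀ C_T hTaylor μ₀ hlink
end
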